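/- Let 0 < q < 1 and φ ∈ ℝ. For the boundary representation ω_φ on ℓ²(ℤ≥0) (ω_φ(z₁₁) = −q^{-1}e^{2iφ}S*C₄, ω_φ(z₂₁) = e^{iφ}D², ω_φ(z₂₂) = C₄S), the operator d = ω_φ(z₂₂)ω_φ(z₁₁) − q^{-1}ω_φ(z₂₁)² satisfies d* d = d d* = q^{-2}·I. -/

import Mathlib

/-!
The operator `d` is scalar. On `e k` the summand `ω(z₂₂)ω(z₁₁)` acts as `λ (1 - q^{4k})` and
`q⁻¹ ω(z₂₁)²` as `-λ q^{4k}`, where `λ = -q⁻¹ e^{2iφ}` (for `k = 0` because `C₄ e₀ = 0`, for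
`k ≥ 1` because `S S* e_k = e_k`). Hence `d = λ • 1`, and `|λ| = q⁻¹`.
-/
noncomputable section
open ContinuousLinearMap Complex

/-- ℓ²(ℤ≥0) -/
abbrev H : Type := lp (fun _ : ℕ => ℂ) 2

/-- standard orthonormal basis vector e_k -/
def e (k : ℕ) : H := lp.single 2 k 1

lemma inner_e_left (k : ℕ) (x : H) : inner ℂ (e k) x = x k := by
  simp [e, lp.inner_single_left]

lemma e_apply (k i : ℕ) : e k i = if i = k then 1 else 0 := by
  simp [e, Pi.single_apply]

lemma ext_e {E : Type*} [AddCommMonoid E] [Module ℂ E] [TopologicalSpace E] [T2Space E]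
    {T T' : H →L[ℂ] E} (h : ∀ k, T (e k) = T' (e k)) : T = T' := by
  refine lp.ext_continuousLinearMap ENNReal.ofNat_ne_top fun k => ?_
  ext1
  exact h k

lemma adjoint_apply_of_shift {S : H →L[ℂ] H} (hS : ∀ k, S (e k) = e (k + 1)) (x : H) (i : ℕ) :
    adjoint S x i = x (i + 1) := by
  rw [← inner_e_left, adjoint_inner_right, hS, inner_e_left]

lemma adjoint_e_succ_of_shift {S : H →L[ℂ] H} (hS : ∀ k, S (e k) = e (k + 1)) (k : ℕ) :
    adjoint S (e (k + 1)) = e k := by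
  ext i
  simp [adjoint_apply_of_shift hS, e_apply]

lemma adjoint_smul_one_mul_self {E : Type*} [NormedAddCommGroup E] [InnerProductSpace ℂ E]
    [CompleteSpace E] (c : ℂ) :
    adjoint (c • (1 : E →L[ℂ] E)) * (c • 1) = ((‖c‖ : ℂ) ^ 2) • 1 := by
  rw [← star_eq_adjoint, star_smul, star_one, smul_mul_smul_comm, one_mul]
  exact congrArg (· • _) (conj_mul' c)

lemma smul_one_mul_adjoint_self {E : Type*} [NormedAddCommGroup E] [InnerProductSpace ℂ E]
    [CompleteSpace E] (c : ℂ) :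
    (c • 1) * adjoint (c • (1 : E →L[ℂ] E)) = ((‖c‖ : ℂ) ^ 2) • 1 := by
  rw [← star_eq_adjoint, star_smul, star_one, smul_mul_smul_comm, one_mul]
  exact congrArg (· • _) (mul_conj' c)

section BoundaryRepresentation

variable {q : ℝ} {S C4 D : H →L[ℂ] H}

lemma C4_S_adjoint_S_C4_apply_e (hq : 0 ≤ q) (hq1 : q ≤ 1) (hS : ∀ k, S (e k) = e (k + 1))
    (hC4 : ∀ k, C4 (e k) = ((Real.sqrt (1 - q ^ (4 * k)) : ℝ) : ℂ) • e k) (k : ℕ) :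
    C4 (S (adjoint S (C4 (e k)))) = ((1 - q ^ (4 * k) : ℝ) : ℂ) • e k := by
  cases k with
  | zero => simp [hC4]
  | succ k =>
    rw [hC4, map_smul, adjoint_e_succ_of_shift hS, map_smul, hS, map_smul, hC4, smul_smul,
      ← ofReal_mul, Real.mul_self_sqrt (sub_nonneg.2 (pow_le_one₀ hq hq1))]

lemma D_pow_four_apply_e (hD : ∀ k, D (e k) = ((q ^ k : ℝ) : ℂ) • e k) (k : ℕ) :
    D (D (D (D (e k)))) = ((q ^ (4 * k) : ℝ) : ℂ) • e k := by
  simp only [hD, map_smul, smul_smul]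
  push_cast
  ring_nf

lemma boundary_qdet_eq_smul_one (hq : 0 ≤ q) (hq1 : q ≤ 1) (φ : ℝ)
    (hS : ∀ k, S (e k) = e (k + 1))
    (hC4 : ∀ k, C4 (e k) = ((Real.sqrt (1 - q ^ (4 * k)) : ℝ) : ℂ) • e k)
    (hD : ∀ k, D (e k) = ((q ^ k : ℝ) : ℂ) • e k) :
    C4 * S * ((-(q⁻¹ : ℂ) * exp (2 * φ * I)) • (adjoint S * C4))
      - (q⁻¹ : ℂ) • (exp (φ * I) • (D * D) * exp (φ * I) • (D * D))
      = (-(q⁻¹ : ℂ) * exp (2 * φ * I)) • 1 := by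
  refine ext_e fun k => ?_
  simp only [_root_.sub_apply, _root_.smul_apply, mul_apply_eq_comp, one_apply_eq_self, map_smul,
    C4_S_adjoint_S_C4_apply_e hq hq1 hS hC4, D_pow_four_apply_e hD, smul_smul, ← sub_smul]
  congr 1
  rw [show (2 : ℂ) * φ * I = φ * I + φ * I by ring, exp_add]
  push_cast
  ring

end BoundaryRepresentation

/-- The image d = ω_φ(z₂₂)ω_φ(z₁₁) − q⁻¹ ω_φ(z₂₁)² of the q-determinant under the boundary
representation ω_φ satisfies d* d = d d* = q⁻²·I. -/
theorem stmt19 (q : ℝ) (hq : 0 < q) (hq1 : q < 1) (φ : ℝ)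
    (S C4 D : H →L[ℂ] H)
    (hS : ∀ k, S (e k) = e (k + 1))
    (hC4 : ∀ k, C4 (e k) = ((Real.sqrt (1 - q ^ (4 * k)) : ℝ) : ℂ) • e k)
    (hD : ∀ k, D (e k) = ((q ^ k : ℝ) : ℂ) • e k)
    (z11 z21 z22 : H →L[ℂ] H)
    (hz11 : z11 = (-(q⁻¹ : ℂ) * Complex.exp (2 * φ * Complex.I)) • (adjoint S * C4))
    (hz21 : z21 = Complex.exp (φ * Complex.I) • (D * D))
    (hz22 : z22 = C4 * S)
    (d : H →L[ℂ] H) (hd : d = z22 * z11 - (q⁻¹ : ℂ) • (z21 * z21)) :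
    adjoint d * d = ((q⁻¹ : ℂ) ^ 2) • (1 : H →L[ℂ] H)
    ∧ d * adjoint d = ((q⁻¹ : ℂ) ^ 2) • (1 : H →L[ℂ] H) := by
  have hnorm : (‖-(q⁻¹ : ℂ) * exp (2 * φ * I)‖ : ℂ) ^ 2 = (q⁻¹ : ℂ) ^ 2 := by
    simp [norm_exp, abs_of_pos hq]
  rw [hd, hz11, hz21, hz22, boundary_qdet_eq_smul_one hq.le hq1.le φ hS hC4 hD]
  exact ⟨by rw [adjoint_smul_one_mul_self, hnorm], by rw [smul_one_mul_adjoint_self, hnorm]⟩
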